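/- Let q ∈ ℂ, let n, p ≥ 1 be integers with n ≥ p+1, let i be an integer with 0 ≤ i ≤ n-1-p, and let J ⊆ [n-1] satisfy {i+1, …, i+p+1} ∩ J = ∅ and i ∈ J ∪ {0}. Then Σ_{I ⊆ {i+1,…,i+p}} (-1)^{|I|} L^{(q)}_{n, I ∪ J} = [p+1]_{-q} · Σ (−q)^{|V'|}(q−1)^{|U'|} η^{(q)}_{n, U' ∪ (V'−1) ∪ V' ∪ {i+1,…,i+p}}, where the last sum ranges over all pairs (U', V') with U' ⊆ J, V' ⊆ Peak(J), U' ∩ V' = ∅, and V'−1 = {v−1 : v ∈ V'}. -/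

import Mathlib

open Finset
open scoped Classical

namespace ExtPeaks

/-- `fget g j` is the `j`-th entry (1-indexed) of the sequence `g : Fin n → ℕ`,
so `fget g j = g ⟨j - 1, _⟩` for `1 ≤ j ≤ n`. -/
def fget {n : ℕ} (g : Fin n → ℕ) (j : ℕ) : ℕ :=
  if h : j - 1 < n then g ⟨j - 1, h⟩ else 0

/-- `Peak(I) = {i ∈ I : i ≥ 2 and i - 1 ∉ I}`. -/
def peakOf (I : Finset ℕ) : Finset ℕ :=
  I.filter fun i => 2 ≤ i ∧ i - 1 ∉ I

/-- The monomial `x_{i_1} ⋯ x_{i_n}` attached to a sequence `g`, as a `Finsupp`. -/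
noncomputable def monomialOf {n : ℕ} (g : Fin n → ℕ) : ℕ →₀ ℕ :=
  ∑ j, Finsupp.single (g j) 1

/-- The (finitely many) weakly increasing sequences of positive integers of length `n`,
satisfying the peak condition `i_{j-1} < i_{j+1}` for `j ∈ Peak(I)`, with monomial `d`. -/
noncomputable def Lseqs (n : ℕ) (I : Finset ℕ) (d : ℕ →₀ ℕ) : Finset (Fin n → ℕ) :=
  (Fintype.piFinset fun _ => d.support).filter fun g =>
    (∀ j k : Fin n, j ≤ k → g j ≤ g k) ∧ (∀ j, 1 ≤ g j) ∧
    (∀ j ∈ peakOf I, fget g (j - 1) < fget g (j + 1)) ∧ monomialOf g = d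

/-- The `q`-fundamental quasisymmetric function `L^{(q)}_{n,I}`, as a formal power
series in the variables `x_1, x_2, …` (defined coefficientwise). -/
noncomputable def Lq (q : ℂ) (n : ℕ) (I : Finset ℕ) : MvPowerSeries ℕ ℂ :=
  fun d => ∑ g ∈ Lseqs n I d,
    q ^ (I.filter fun j => fget g j = fget g (j + 1)).card *
      (q + 1) ^ (Finset.image g Finset.univ).card

/-- The weakly increasing sequences of positive integers of length `s` with
`i_j = i_{j+1}` for all `j ∈ I`, with monomial `d`. -/
noncomputable def etaSeqs (s : ℕ) (I : Finset ℕ) (d : ℕ →₀ ℕ) : Finset (Fin s → ℕ) :=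
  (Fintype.piFinset fun _ => d.support).filter fun g =>
    (∀ j k : Fin s, j ≤ k → g j ≤ g k) ∧ (∀ j, 1 ≤ g j) ∧
    (∀ j ∈ I, fget g j = fget g (j + 1)) ∧ monomialOf g = d

/-- The enriched `q`-monomial quasisymmetric function `η^{(q)}_{s,I}`. -/
noncomputable def etaq (q : ℂ) (s : ℕ) (I : Finset ℕ) : MvPowerSeries ℕ ℂ :=
  fun d => ∑ g ∈ etaSeqs s I d, (q + 1) ^ (Finset.image g Finset.univ).card

/-- `I` is a `p`-extended peak set: `I ∪ {0}` contains no `p + 1` consecutive integers. -/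
def IsExtPeakSet (p : ℕ) (I : Finset ℕ) : Prop :=
  ∀ a : ℕ, ¬ Finset.Icc a (a + p) ⊆ insert 0 I

/-- `s^{(p)}_n`: the number of `p`-extended peak subsets of `[n-1]`, with `s^{(p)}_0 = 0`. -/
noncomputable def sCount (p n : ℕ) : ℕ :=
  if n = 0 then 0
  else ((Finset.Icc 1 (n - 1)).powerset.filter fun I => IsExtPeakSet p I).card

/-- The value `π(j)` of the permutation at the (1-indexed) position `j`,
as an element of `{1, …, n}`. -/
def pval {n : ℕ} (π : Equiv.Perm (Fin n)) (j : ℕ) : ℕ :=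
  if h : j - 1 < n then (π ⟨j - 1, h⟩ : ℕ) + 1 else 0

/-- The descent set `Des(π) = {1 ≤ i ≤ n-1 : π(i) > π(i+1)}`. -/
def desSet {n : ℕ} (π : Equiv.Perm (Fin n)) : Finset ℕ :=
  (Finset.Icc 1 (n - 1)).filter fun i => pval π (i + 1) < pval π i

/-- The peak set `Peak(π) = {2 ≤ i ≤ n-1 : π(i-1) < π(i) > π(i+1)}`. -/
def peakSet {n : ℕ} (π : Equiv.Perm (Fin n)) : Finset ℕ :=
  (Finset.Icc 2 (n - 1)).filter fun i =>
    pval π (i - 1) < pval π i ∧ pval π (i + 1) < pval π i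

/-- The `p`-extended peak set `Peak_p(π)` of a permutation: the descents `i` such that
`i ≤ p - 1` or some position `i - j` (with `1 ≤ j ≤ p` and `i - j ≥ 1`) is not a descent. -/
def peakP {n : ℕ} (p : ℕ) (π : Equiv.Perm (Fin n)) : Finset ℕ :=
  (desSet π).filter fun i =>
    i ≤ p - 1 ∨ ∃ j ∈ Finset.Icc 1 p, 1 ≤ i - j ∧ i - j ∉ desSet π

/-- `ρ_p = exp(-iπ(p-1)/(p+1))`. -/
noncomputable def rho (p : ℕ) : ℂ :=
  Complex.exp (-((Real.pi : ℂ) * ((p : ℂ) - 1) / ((p : ℂ) + 1)) * Complex.I)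

/-- `[m]_c = 1 + c + ⋯ + c^(m-1)`. -/
noncomputable def qint (m : ℕ) (c : ℂ) : ℂ := ∑ j ∈ Finset.range m, c ^ j

/-- The entry of the transition matrix `B^{(q)}` at row `J`, column `I`:
`Σ (-q)^{|K|} (q-1)^{|J'|}` over pairs `(J', K)` with `J' ⊆ I`, `K ⊆ Peak(I)`,
`J' ∩ K = ∅` and `J' ∪ (K-1) ∪ K = J`. -/
noncomputable def Bentry (q : ℂ) (J I : Finset ℕ) : ℂ :=
  ∑ J' ∈ I.powerset, ∑ K ∈ (peakOf I).powerset,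
    if Disjoint J' K ∧ J' ∪ K.image (· - 1) ∪ K = J then
      (-q) ^ K.card * (q - 1) ^ J'.card
    else 0

/-- The collection of all subsets of `[n-1]` (the empty collection when `n = 0`,
so that `B_0` is the empty matrix). -/
def subsetsOf (n : ℕ) : Finset (Finset ℕ) :=
  if n = 0 then ∅ else (Finset.Icc 1 (n - 1)).powerset

/-- The matrix `B_n^{(q)}`, with rows and columns indexed by the subsets of `[n-1]`. -/
noncomputable def Bmat (q : ℂ) (n : ℕ) : Matrix ↥(subsetsOf n) ↥(subsetsOf n) ℂ :=
  fun J I => Bentry q J.1 I.1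

/-- The entry of `A_n^{(q)}` at row `J'`, column `I'`, namely
`B_n^{(q)}(J' ∪ {n-1}, I' ∪ {n-1})`. -/
noncomputable def Aentry (q : ℂ) (n : ℕ) (J I : Finset ℕ) : ℂ :=
  Bentry q (insert (n - 1) J) (insert (n - 1) I)

/-- The matrix `A_n^{(q)}`, with rows and columns indexed by the subsets of `[n-2]`. -/
noncomputable def Amat (q : ℂ) (n : ℕ) :
    Matrix ↥(subsetsOf (n - 1)) ↥(subsetsOf (n - 1)) ℂ :=
  fun J I => Aentry q n J.1 I.1

/-- The dimension of the kernel of (the linear map associated with) `B_n^{(q)}`. -/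
noncomputable def dimKer (q : ℂ) (n : ℕ) : ℕ :=
  Module.finrank ℂ (LinearMap.ker (Matrix.mulVecLin (Bmat q n)))

/-!
Take the coefficient of a monomial: both sides become sums over the weakly increasing sequences
`g` with that monomial, and `g` enters `L^{(q)}_{n,S}` and `η^{(q)}_{n,S}` only through its set
`E` of plateaus `j` (with `i_j = i_{j+1}`), since for such sequences the peak condition at `j`
says that `j - 1` and `j` are not both plateaus. For fixed `E` the identity is finite
combinatorics. On the right, the sum over `(U', V')` collapses to `[p+1]_{-q}` times the
`E`-weight of `L_{n,J}` when `{i+1,…,i+p} ⊆ E`, and to `0` otherwise. On the left, a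
non-plateau `m ∈ {i+1,…,i+p}` gives a sign-reversing involution `I ↦ I △ {m}`; when there is
none, `I ∪ J` has no forbidden new peak exactly when `I = {i+1,…,i+k}`, contributing `(-q)^k`
times the `E`-weight of `J`.
-/

/-- The coefficient that a weakly increasing sequence with plateau set `E` (the positions `j`
with `i_j = i_{j+1}`) contributes to `L^{(q)}_{n,S}`, up to the factor `(q+1)^{|{i_1,…,i_n}|}`. -/
noncomputable def fundWeight (q : ℂ) (E : Set ℕ) (S : Finset ℕ) : ℂ :=
  if ∀ j ∈ peakOf S, ¬(j - 1 ∈ E ∧ j ∈ E) then q ^ #(S.filter (· ∈ E)) else 0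

section Combinatorics

variable (q : ℂ) (E : Set ℕ)

theorem sum_powerset_pow_card {R ι : Type*} [CommSemiring R] (x : R) (s : Finset ι) :
    ∑ t ∈ s.powerset, x ^ #t = (x + 1) ^ #s := by
  simpa using sum_pow_mul_eq_add_pow x 1 s

theorem sum_powerset_disjoint_subset_eq_pow {J V : Finset ℕ} (hV : V ⊆ J.filter (· ∈ E)) :
    ∑ U ∈ J.powerset, (if Disjoint U V ∧ ↑U ⊆ E then (q - 1) ^ #U else 0) =
      q ^ (#(J.filter (· ∈ E)) - #V) := by
  have hfilter : J.powerset.filter (fun U => Disjoint U V ∧ ↑U ⊆ E) =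
      (J.filter (· ∈ E) \ V).powerset := by
    ext U
    simp only [mem_filter, mem_powerset, subset_iff, mem_sdiff, disjoint_left, Set.subset_def,
      mem_coe]
    grind
  rw [← sum_filter, hfilter, sum_powerset_pow_card, sub_add_cancel, card_sdiff_of_subset hV]

theorem sum_disjoint_pairs_eq_fundWeight (J : Finset ℕ) :
    ∑ U ∈ J.powerset, ∑ V ∈ (peakOf J).powerset.filter (fun V => Disjoint U V),
      (-q) ^ #V * (q - 1) ^ #U * (if ↑(U ∪ V.image (· - 1) ∪ V) ⊆ E then 1 else 0) =
    fundWeight q E J := by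
  set B := (peakOf J).filter fun v => v - 1 ∈ E ∧ v ∈ E
  set c := #(J.filter (· ∈ E))
  have hsplit : ∀ U V : Finset ℕ, (↑(U ∪ V.image (· - 1) ∪ V) ⊆ E) ↔
      ↑U ⊆ E ∧ ∀ v ∈ V, v - 1 ∈ E ∧ v ∈ E := by
    intro U V
    simp only [coe_union, coe_image, Set.union_subset_iff, Set.image_subset_iff]
    constructor
    · rintro ⟨⟨hU, hV1⟩, hV⟩
      exact ⟨hU, fun v hv => ⟨hV1 hv, hV hv⟩⟩
    · rintro ⟨hU, hV⟩
      exact ⟨⟨hU, fun v hv => (hV v hv).1⟩, fun v hv => (hV v hv).2⟩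
  have hBJ : B ⊆ J.filter (· ∈ E) := fun v hv => by
    simp only [B, peakOf, mem_filter] at hv ⊢
    exact ⟨hv.1.1, hv.2.2⟩
  calc _ = ∑ V ∈ (peakOf J).powerset, ∑ U ∈ J.powerset,
        (if V ⊆ B then (-q) ^ #V else 0) *
          (if Disjoint U V ∧ ↑U ⊆ E then (q - 1) ^ #U else 0) := by
        simp only [sum_filter]
        rw [sum_comm]
        refine sum_congr rfl fun V hV => sum_congr rfl fun U _ => ?_
        have hVB : V ⊆ B ↔ ∀ v ∈ V, v - 1 ∈ E ∧ v ∈ E := by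
          simp only [B, subset_iff, mem_filter]
          exact forall₂_congr fun v hv => and_iff_right (mem_powerset.mp hV hv)
        simp only [hsplit, hVB]
        split_ifs <;> simp_all
    _ = ∑ V ∈ B.powerset, (-q) ^ #V * q ^ (c - #V) := by
        simp only [← mul_sum]
        rw [← sum_subset (powerset_mono.mpr (filter_subset _ _)) fun V _ hV => by
          rw [if_neg (mt mem_powerset.mpr hV), zero_mul]]
        refine sum_congr rfl fun V hV => ?_
        rw [mem_powerset] at hV
        rw [if_pos hV, sum_powerset_disjoint_subset_eq_pow q E (hV.trans hBJ)]
    _ = ∑ V ∈ B.powerset, (-1) ^ #V * q ^ c := by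
        refine sum_congr rfl fun V hV => ?_
        have hVc : #V ≤ c := card_le_card ((mem_powerset.mp hV).trans hBJ)
        rw [neg_pow, mul_assoc, ← pow_add, Nat.add_sub_cancel' hVc]
    _ = fundWeight q E J := by
        rw [← sum_mul, (by simpa using sum_pow_mul_eq_add_pow (-1 : ℂ) 1 B :
          ∑ V ∈ B.powerset, (-1 : ℂ) ^ #V = 0 ^ #B)]
        have hB : B = ∅ ↔ ∀ j ∈ peakOf J, ¬(j - 1 ∈ E ∧ j ∈ E) := filter_eq_empty_iff
        unfold fundWeight
        split_ifs with h
        · rw [hB.mpr h, card_empty, pow_zero, one_mul]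
        · rw [zero_pow (card_ne_zero.mpr (nonempty_iff_ne_empty.mpr (mt hB.mp h))), zero_mul]

theorem fundWeight_insert_of_notMem {m : ℕ} (hm : m ∉ E) (S : Finset ℕ) :
    fundWeight q E (insert m S) = fundWeight q E S := by
  have hpeak : ∀ j, ¬(j - 1 ∈ E ∧ j ∈ E) ∨ (j ∈ peakOf (insert m S) ↔ j ∈ peakOf S) := by
    intro j
    by_cases hj : j = m ∨ j - 1 = m
    · left
      rintro ⟨h1, h2⟩
      rcases hj with rfl | rfl <;> contradiction
    · right
      rw [not_or] at hj
      simp [peakOf, hj.1, hj.2]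
  have hcond : (∀ j ∈ peakOf (insert m S), ¬(j - 1 ∈ E ∧ j ∈ E)) ↔
      ∀ j ∈ peakOf S, ¬(j - 1 ∈ E ∧ j ∈ E) :=
    forall_congr' fun j => by rcases hpeak j with h | h <;> simp [h]
  simp only [fundWeight, hcond, filter_insert, if_neg hm]

theorem peakOf_union {i p : ℕ} {I J : Finset ℕ} (hI : I ⊆ Icc (i + 1) (i + p))
    (hJ : Disjoint (Icc (i + 1) (i + p + 1)) J) (hiJ : i ∈ J ∨ i = 0) :
    peakOf (I ∪ J) = peakOf J ∪ (peakOf I).erase (i + 1) := by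
  have hI' : ∀ j ∈ I, i + 1 ≤ j ∧ j ≤ i + p := fun j hj => mem_Icc.mp (hI hj)
  have hJ' : ∀ j ∈ J, ¬(i + 1 ≤ j ∧ j ≤ i + p + 1) := fun j hj h =>
    disjoint_left.mp hJ (mem_Icc.mpr h) hj
  ext j
  simp only [peakOf, mem_union, mem_filter, mem_erase]
  grind

theorem peakOf_subset_singleton_iff {a p : ℕ} {I : Finset ℕ} (hI : I ⊆ Icc (a + 1) (a + p)) :
    peakOf I ⊆ {a + 1} ↔ I = Icc (a + 1) (a + #I) := by
  constructor
  · intro hpk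
    rcases I.eq_empty_or_nonempty with rfl | hne
    · simp
    have hdown : ∀ t ∈ I, ∀ s ≤ t, a + 1 ≤ s → s ∈ I := by
      intro t ht s hst
      refine Nat.decreasingInduction (motive := fun s _ => a + 1 ≤ s → s ∈ I)
        (fun k _ ih hk => ?_) (fun _ => ht) hst
      by_contra hkI
      have := mem_singleton.mp (hpk (mem_filter.mpr ⟨ih (by omega), by omega, by simpa using hkI⟩))
      omega
    have hM : I = Icc (a + 1) (I.max' hne) := by
      ext t
      refine ⟨fun ht => mem_Icc.mpr ⟨(mem_Icc.mp (hI ht)).1, I.le_max' t ht⟩, fun ht => ?_⟩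
      exact hdown _ (I.max'_mem hne) t (mem_Icc.mp ht).2 (mem_Icc.mp ht).1
    have hcard : #I = I.max' hne - a := by
      conv_lhs => rw [hM]
      rw [Nat.card_Icc]
      omega
    rw [hcard]
    convert hM using 2
    have := (mem_Icc.mp (hI (I.max'_mem hne))).1
    omega
  · intro hIeq j hj
    rw [hIeq] at hj
    simp only [peakOf, mem_filter, mem_Icc] at hj
    rw [mem_singleton]
    omega

theorem sum_powerset_Icc_initial_segments (a p : ℕ) :
    ∑ I ∈ (Icc (a + 1) (a + p)).powerset,
      (-1) ^ #I * (if peakOf I ⊆ {a + 1} then q ^ #I else 0) = qint (p + 1) (-q) := by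
  have hcard : ∀ k, #(Icc (a + 1) (a + k)) = k := fun k => by
    rw [Nat.card_Icc]
    omega
  have hseg : (Icc (a + 1) (a + p)).powerset.filter (fun I => peakOf I ⊆ {a + 1}) =
      (range (p + 1)).image fun k => Icc (a + 1) (a + k) := by
    ext I
    simp only [mem_filter, mem_powerset, mem_image, mem_range]
    constructor
    · rintro ⟨hI, hpk⟩
      have := card_le_card hI
      rw [hcard] at this
      exact ⟨#I, by omega, ((peakOf_subset_singleton_iff hI).mp hpk).symm⟩
    · rintro ⟨k, hk, rfl⟩
      have hsub : Icc (a + 1) (a + k) ⊆ Icc (a + 1) (a + p) := Icc_subset_Icc le_rfl (by omega)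
      exact ⟨hsub, (peakOf_subset_singleton_iff hsub).mpr (by rw [hcard])⟩
  have hinj : Set.InjOn (fun k => Icc (a + 1) (a + k)) ↑(range (p + 1)) :=
    fun k _ l _ hkl => by simpa [hcard] using congrArg card hkl
  simp only [mul_ite, mul_zero, ← mul_pow, neg_one_mul]
  rw [← sum_filter, hseg, sum_image hinj]
  simp only [hcard, qint]

theorem fundWeight_union_of_subset {i p : ℕ} {I J : Finset ℕ} (hI : I ⊆ Icc (i + 1) (i + p))
    (hJ : Disjoint (Icc (i + 1) (i + p + 1)) J) (hiJ : i ∈ J ∨ i = 0)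
    (hE : ↑(Icc (i + 1) (i + p)) ⊆ E) :
    fundWeight q E (I ∪ J) = (if peakOf I ⊆ {i + 1} then q ^ #I else 0) * fundWeight q E J := by
  have hIJ : Disjoint I J :=
    disjoint_of_subset_left (hI.trans (Icc_subset_Icc le_rfl (by omega))) hJ
  have hIE : I.filter (· ∈ E) = I := filter_true_of_mem fun j hj => hE (hI hj)
  have hcard : #((I ∪ J).filter (· ∈ E)) = #I + #(J.filter (· ∈ E)) := by
    rw [filter_union, hIE, card_union_of_disjoint (hIJ.mono_right (filter_subset _ _))]
  have hpk : (∀ j ∈ (peakOf I).erase (i + 1), ¬(j - 1 ∈ E ∧ j ∈ E)) ↔ peakOf I ⊆ {i + 1} := by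
    refine ⟨fun h j hj => ?_, fun h j hj => absurd (h (mem_of_mem_erase hj)) ?_⟩
    · by_contra hne
      have hjI := (mem_filter.mp hj).1
      have := mem_Icc.mp (hI hjI)
      refine h j (mem_erase.mpr ⟨by simpa using hne, hj⟩) ⟨hE ?_, hE (hI hjI)⟩
      simp only [coe_Icc, Set.mem_Icc]
      grind
    · simpa using ne_of_mem_erase hj
  simp only [fundWeight, peakOf_union hI hJ hiJ, forall_mem_union, hpk, hcard]
  split_ifs <;> simp_all [pow_add]

theorem sum_alternating_fundWeight {i p : ℕ} {J : Finset ℕ}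
    (hJ : Disjoint (Icc (i + 1) (i + p + 1)) J) (hiJ : i ∈ J ∨ i = 0) :
    ∑ I ∈ (Icc (i + 1) (i + p)).powerset, (-1) ^ #I * fundWeight q E (I ∪ J) =
      if ↑(Icc (i + 1) (i + p)) ⊆ E then qint (p + 1) (-q) * fundWeight q E J else 0 := by
  split_ifs with hE
  · rw [← sum_powerset_Icc_initial_segments q i p, sum_mul]
    refine sum_congr rfl fun I hI => ?_
    rw [fundWeight_union_of_subset q E (mem_powerset.mp hI) hJ hiJ hE, mul_assoc]
  · obtain ⟨m, hmP, hmE⟩ := Set.not_subset.mp hE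
    rw [← insert_erase (mem_coe.mp hmP), sum_powerset_insert (notMem_erase m _),
      ← sum_add_distrib]
    refine sum_eq_zero fun I hI => ?_
    have hmI : m ∉ I := fun h => notMem_erase m _ (mem_powerset.mp hI h)
    rw [card_insert_of_notMem hmI, insert_union, fundWeight_insert_of_notMem q E hmE, pow_succ]
    ring

theorem sum_alternating_fundWeight_eq_qint_mul {i p : ℕ} {J : Finset ℕ}
    (hJ : Disjoint (Icc (i + 1) (i + p + 1)) J) (hiJ : i ∈ J ∨ i = 0) :
    ∑ I ∈ (Icc (i + 1) (i + p)).powerset, (-1) ^ #I * fundWeight q E (I ∪ J) =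
      qint (p + 1) (-q) *
        ∑ U ∈ J.powerset, ∑ V ∈ (peakOf J).powerset.filter (fun V => Disjoint U V),
          (-q) ^ #V * (q - 1) ^ #U *
            (if ↑(U ∪ V.image (· - 1) ∪ V ∪ Icc (i + 1) (i + p)) ⊆ E then 1 else 0) := by
  have hsplit : ∀ X : Finset ℕ,
      ↑(X ∪ Icc (i + 1) (i + p)) ⊆ E ↔ ↑X ⊆ E ∧ ↑(Icc (i + 1) (i + p)) ⊆ E := fun X => by
    rw [coe_union, Set.union_subset_iff]
  rw [sum_alternating_fundWeight q E hJ hiJ, ← sum_disjoint_pairs_eq_fundWeight]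
  by_cases hE : ↑(Icc (i + 1) (i + p)) ⊆ E
  · simp only [hsplit, hE, and_true, if_true]
  · simp only [hsplit, hE, and_false, if_false, mul_zero, sum_const_zero]

end Combinatorics

def plateaus {n : ℕ} (g : Fin n → ℕ) : Set ℕ := {j | fget g j = fget g (j + 1)}

noncomputable def incSeqs (n : ℕ) (d : ℕ →₀ ℕ) : Finset (Fin n → ℕ) :=
  (Fintype.piFinset fun _ => d.support).filter fun g =>
    (∀ j k : Fin n, j ≤ k → g j ≤ g k) ∧ (∀ j, 1 ≤ g j) ∧ monomialOf g = d

section Coefficients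

variable {n : ℕ}

theorem Lseqs_eq_filter (S : Finset ℕ) (d : ℕ →₀ ℕ) :
    Lseqs n S d =
      (incSeqs n d).filter fun g => ∀ j ∈ peakOf S, fget g (j - 1) < fget g (j + 1) := by
  rw [incSeqs, filter_filter]
  exact filter_congr fun g _ => by tauto

theorem etaSeqs_eq_filter (S : Finset ℕ) (d : ℕ →₀ ℕ) :
    etaSeqs n S d = (incSeqs n d).filter fun g => ↑S ⊆ plateaus g := by
  rw [incSeqs, filter_filter]
  refine filter_congr fun g _ => ?_
  simp only [Set.subset_def, mem_coe, plateaus, Set.mem_ofPred_eq]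
  tauto

theorem fget_mono {g : Fin n → ℕ} (hg : ∀ j k : Fin n, j ≤ k → g j ≤ g k) {a b : ℕ}
    (ha : 1 ≤ a) (hab : a ≤ b) (hb : b ≤ n) : fget g a ≤ fget g b := by
  rw [fget, fget, dif_pos (by omega), dif_pos (by omega)]
  exact hg _ _ (Fin.mk_le_mk.mpr (by omega))

theorem fget_lt_iff {g : Fin n → ℕ} (hg : ∀ j k : Fin n, j ≤ k → g j ≤ g k) {j : ℕ}
    (hj : 2 ≤ j) (hjn : j + 1 ≤ n) :
    fget g (j - 1) < fget g (j + 1) ↔ ¬(j - 1 ∈ plateaus g ∧ j ∈ plateaus g) := by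
  have h1 := fget_mono hg (a := j - 1) (b := j) (by omega) (by omega) (by omega)
  have h2 := fget_mono hg (a := j) (b := j + 1) (by omega) (by omega) hjn
  simp only [plateaus, Set.mem_ofPred_eq, Nat.sub_add_cancel (by omega : 1 ≤ j)]
  omega

theorem coeff_Lq (q : ℂ) {S : Finset ℕ} (hS : S ⊆ Icc 1 (n - 1)) (d : ℕ →₀ ℕ) :
    MvPowerSeries.coeff d (Lq q n S) =
      ∑ g ∈ incSeqs n d, fundWeight q (plateaus g) S * (q + 1) ^ #(univ.image g) := by
  rw [MvPowerSeries.coeff_apply, Lq, Lseqs_eq_filter, sum_filter]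
  refine sum_congr rfl fun g hg => ?_
  have hmono := (mem_filter.mp hg).2.1
  have hpeak : (∀ j ∈ peakOf S, fget g (j - 1) < fget g (j + 1)) ↔
      ∀ j ∈ peakOf S, ¬(j - 1 ∈ plateaus g ∧ j ∈ plateaus g) := by
    refine forall₂_congr fun j hj => ?_
    have hj' := mem_filter.mp hj
    exact fget_lt_iff hmono hj'.2.1 (by have := mem_Icc.mp (hS hj'.1); omega)
  rw [fundWeight, ite_mul, zero_mul]
  -- the two counted filters differ only in their `Decidable` instances
  exact if_congr hpeak (by congr) rfl

theorem coeff_etaq (q : ℂ) (S : Finset ℕ) (d : ℕ →₀ ℕ) :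
    MvPowerSeries.coeff d (etaq q n S) =
      ∑ g ∈ incSeqs n d, (if ↑S ⊆ plateaus g then 1 else 0) * (q + 1) ^ #(univ.image g) := by
  rw [MvPowerSeries.coeff_apply, etaq, etaSeqs_eq_filter, sum_filter]
  simp only [ite_mul, one_mul, zero_mul]

end Coefficients

theorem alternating_sum_eq_qint_mul_general (q : ℂ) (n p : ℕ) (hn : p + 1 ≤ n)
    (i : ℕ) (hi : i ≤ n - 1 - p) (J : Finset ℕ) (hJ : J ⊆ Finset.Icc 1 (n - 1))
    (hJdisj : Disjoint (Finset.Icc (i + 1) (i + p + 1)) J)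
    (hiJ : i ∈ J ∨ i = 0) :
    ∑ I ∈ (Finset.Icc (i + 1) (i + p)).powerset,
      ((-1 : ℂ) ^ I.card) • Lq q n (I ∪ J) =
    qint (p + 1) (-q) •
      ∑ U' ∈ J.powerset,
        ∑ V' ∈ (peakOf J).powerset.filter (fun V' => Disjoint U' V'),
          ((-q) ^ V'.card * (q - 1) ^ U'.card) •
            etaq q n (U' ∪ V'.image (· - 1) ∪ V' ∪ Finset.Icc (i + 1) (i + p)) := by
  ext d
  have hIJ : ∀ I ∈ (Icc (i + 1) (i + p)).powerset, I ∪ J ⊆ Icc 1 (n - 1) := fun I hI =>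
    union_subset ((mem_powerset.mp hI).trans (Icc_subset_Icc (by omega) (by omega))) hJ
  simp only [map_sum, MvPowerSeries.coeff_smul, coeff_etaq]
  rw [sum_congr rfl fun I hI => by rw [coeff_Lq q (hIJ I hI)]]
  calc _ = ∑ g ∈ incSeqs n d, (∑ I ∈ (Icc (i + 1) (i + p)).powerset,
          (-1) ^ #I * fundWeight q (plateaus g) (I ∪ J)) * (q + 1) ^ #(univ.image g) := by
        simp only [mul_sum, sum_mul, mul_assoc]
        exact sum_comm
    _ = _ := by
        simp only [sum_alternating_fundWeight_eq_qint_mul q _ hJdisj hiJ, mul_sum, sum_mul,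
          mul_assoc]
        rw [sum_comm]
        exact sum_congr rfl fun U _ => sum_comm

/-- For any `q ∈ ℂ`, `n ≥ p + 1`, `0 ≤ i ≤ n - 1 - p` and `J ⊆ [n-1]`
with `{i+1, …, i+p+1} ∩ J = ∅` and `i ∈ J ∪ {0}`:
`Σ_{I ⊆ {i+1,…,i+p}} (-1)^{|I|} L^{(q)}_{n, I ∪ J}
  = [p+1]_{-q} · Σ_{U' ⊆ J, V' ⊆ Peak(J), U' ∩ V' = ∅}
      (-q)^{|V'|} (q-1)^{|U'|} η^{(q)}_{n, U' ∪ (V'-1) ∪ V' ∪ {i+1,…,i+p}}`. -/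
theorem alternating_sum_eq_qint_mul (q : ℂ) (n p : ℕ) (hp : 1 ≤ p) (hn : p + 1 ≤ n)
    (i : ℕ) (hi : i ≤ n - 1 - p) (J : Finset ℕ) (hJ : J ⊆ Finset.Icc 1 (n - 1))
    (hJdisj : Disjoint (Finset.Icc (i + 1) (i + p + 1)) J)
    (hiJ : i ∈ J ∨ i = 0) :
    ∑ I ∈ (Finset.Icc (i + 1) (i + p)).powerset,
      ((-1 : ℂ) ^ I.card) • Lq q n (I ∪ J) =
    qint (p + 1) (-q) •
      ∑ U' ∈ J.powerset,
        ∑ V' ∈ (peakOf J).powerset.filter (fun V' => Disjoint U' V'),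
          ((-q) ^ V'.card * (q - 1) ^ U'.card) •
            etaq q n (U' ∪ V'.image (· - 1) ∪ V' ∪ Finset.Icc (i + 1) (i + p)) :=
  alternating_sum_eq_qint_mul_general q n p hn i hi J hJ hJdisj hiJ

end ExtPeaks
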